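/- arXiv:1507.07968 — 5 statements merged into one kernel-verified Lean document; each statement's English description precedes it below -/
import Mathlib

section
/- For integers m ≥ 1, n ≥ 0, and k ≥ 1, the absorption/extraction identity holds: k · C(n,k;m) = n · sum over i from 1 to m of i · C(n-1, k-i; m), where C(n-1,j;m) = 0 for j < 0. -/
open Polynomial Finset

/-- Polynomial (extended binomial) coefficient: the coefficient of `t^k` in
`(1 + t + ⋯ + t^m)^n`, defined to be `0` for negative `k`. -/
noncomputable def pc (m n : ℕ) (k : ℤ) : ℤ :=
  if 0 ≤ k then
    ((∑ i ∈ Finset.range (m + 1), (Polynomial.X : Polynomial ℤ) ^ i) ^ n).coeff k.toNat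
  else 0

/-!
Apply the Euler operator `X · d/dX` to `p ^ n`, where `p = 1 + X + ⋯ + X ^ m`. It multiplies the
coefficient of `X ^ k` by `k`, while the chain rule gives `X (p ^ n)' = n p ^ (n - 1) (X p')` with
`X p' = ∑_{i ≤ m} i X ^ i`; the coefficient of `X ^ k` in `p ^ (n - 1) X ^ i` is
`C(n - 1, k - i; m)`.
-/

namespace Polynomial

variable {R : Type*} [Semiring R]

theorem coeff_X_mul_derivative (q : R[X]) (k : ℕ) :
    (X * derivative q).coeff k = k * q.coeff k := by
  cases k with
  | zero => simp
  | succ k => rw [coeff_X_mul, coeff_derivative, Nat.cast_comm]; push_cast; rfl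

theorem X_mul_derivative_X_pow (i : ℕ) : X * derivative (X ^ i : R[X]) = C (i : R) * X ^ i := by
  cases i with
  | zero => simp
  | succ i => rw [derivative_X_pow, ← mul_assoc, X_mul_C, mul_assoc, ← pow_succ', Nat.add_sub_cancel]

end Polynomial

noncomputable abbrev pcBase (m : ℕ) : ℤ[X] := ∑ i ∈ range (m + 1), X ^ i

theorem pc_natCast (m n k : ℕ) : pc m n k = (pcBase m ^ n).coeff k := by
  simp [pc]

theorem coeff_pcBase_pow_mul_X_pow (m n i k : ℕ) :
    (pcBase m ^ n * X ^ i).coeff k = pc m n ((k : ℤ) - i) := by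
  rw [coeff_mul_X_pow']
  split_ifs with h
  · obtain ⟨j, rfl⟩ := Nat.exists_eq_add_of_le h
    simp [pc_natCast]
  · rw [pc, if_neg (by omega)]

theorem X_mul_derivative_pcBase (m : ℕ) :
    X * derivative (pcBase m) = ∑ i ∈ range (m + 1), C (i : ℤ) * X ^ i := by
  simp only [pcBase, map_sum, mul_sum, X_mul_derivative_X_pow]

theorem pc_absorption_general (m n k : ℕ) :
    (k : ℤ) * pc m n k = (n : ℤ) * ∑ i ∈ Finset.Icc 1 m, (i : ℤ) * pc m (n - 1) ((k : ℤ) - i) := by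
  have hIcc : Icc 1 m ⊆ range (m + 1) := fun i hi => by simp at hi ⊢; omega
  have hzero : ∀ i ∈ range (m + 1), i ∉ Icc 1 m → (i : ℤ) * pc m (n - 1) ((k : ℤ) - i) = 0 :=
    fun i hi hi' => by simp at hi hi'; simp [show i = 0 by omega]
  calc (k : ℤ) * pc m n k
      = (X * derivative (pcBase m ^ n)).coeff k := by rw [coeff_X_mul_derivative, pc_natCast]
    _ = (C (n : ℤ) * (pcBase m ^ (n - 1) * (X * derivative (pcBase m)))).coeff k := by
      rw [derivative_pow]; ring_nf
    _ = n * ∑ i ∈ range (m + 1), (i : ℤ) * pc m (n - 1) ((k : ℤ) - i) := by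
      rw [coeff_C_mul, X_mul_derivative_pcBase, mul_sum, finsetSum_coeff]
      refine congrArg _ (sum_congr rfl fun i _ => ?_)
      rw [mul_left_comm, coeff_C_mul, coeff_pcBase_pow_mul_X_pow]
    _ = n * ∑ i ∈ Icc 1 m, (i : ℤ) * pc m (n - 1) ((k : ℤ) - i) := by
      rw [sum_subset hIcc hzero]

theorem pc_absorption (m n k : ℕ) (hm : 1 ≤ m) (hk : 1 ≤ k) :
    (k : ℤ) * pc m n k = (n : ℤ) * ∑ i ∈ Finset.Icc 1 m, (i : ℤ) * pc m (n - 1) ((k : ℤ) - i) :=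
  pc_absorption_general m n k
end

section
/- For integers m ≥ 1 and n ≥ 0: sum over k from 0 to n of (-1)^(n-k) · C(n-k, k; m) equals 1 if n ≡ 0 (mod m+2), equals -1 if n ≡ 1 (mod m+2), and equals 0 otherwise. -/
open Polynomial Finset

namespace PcAux

noncomputable def p (m : ℕ) : Polynomial ℤ := ∑ i ∈ Finset.range (m + 1), X ^ i

noncomputable def q (m : ℕ) : Polynomial ℤ := -(X * p m)

noncomputable def F (m n : ℕ) : Polynomial ℤ := ∑ j ∈ Finset.range (n + 1), q m ^ j

noncomputable def S (m n : ℕ) : ℤ := (F m n).coeff n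

lemma q_pow (m j : ℕ) : q m ^ j = C ((-1 : ℤ) ^ j) * (p m ^ j * X ^ j) := by
  rw [q, neg_pow, mul_pow, map_pow, map_neg, map_one]
  ring

lemma coeff_q_pow (m j k : ℕ) : (q m ^ j).coeff (k + j) = (-1 : ℤ) ^ j * (p m ^ j).coeff k := by
  rw [q_pow, coeff_C_mul, ← coeff_mul_X_pow (p m ^ j) j k]

lemma coeff_q_pow_low (m j k : ℕ) (h : k < j) : (q m ^ j).coeff k = 0 := by
  rw [q_pow, coeff_C_mul, coeff_mul_X_pow']
  simp [Nat.not_le_of_lt h]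

lemma coeff_F (m n k : ℕ) (h : k ≤ n) : (F m n).coeff k = S m k := by
  simp only [F, S, finset_sum_coeff]
  apply (Finset.sum_subset (by simp [Nat.succ_le_succ h] : range (k+1) ⊆ range (n+1)) _).symm
  intro j _ hj
  exact coeff_q_pow_low m j k (by simpa using hj)

lemma one_sub_q (m : ℕ) : (1 : Polynomial ℤ) - q m = ∑ i ∈ Finset.range (m + 2), X ^ i := by
  rw [Finset.sum_range_succ' (fun i => (X : Polynomial ℤ) ^ i)]
  simp only [q, p, sub_neg_eq_add, pow_zero, Finset.mul_sum]
  rw [add_comm]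
  congr 1
  exact Finset.sum_congr rfl fun i _ => by ring

lemma key (m n : ℕ) :
    (1 - X ^ (m + 2)) * F m n = (1 - X) * (1 - q m ^ (n + 1)) := by
  have h1 : ((1 : Polynomial ℤ) - X) * (1 - q m) = 1 - X ^ (m + 2) := by
    rw [one_sub_q]
    have := geom_sum_mul (X : Polynomial ℤ) (m + 2)
    linear_combination -this
  have h2 : F m n * (1 - q m) = 1 - q m ^ (n + 1) := by
    have := geom_sum_mul (q m) (n + 1)
    unfold F
    linear_combination -this
  calc (1 - X ^ (m + 2)) * F m n = (1 - X) * (F m n * (1 - q m)) := by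
        rw [← h1]; ring
    _ = (1 - X) * (1 - q m ^ (n + 1)) := by rw [h2]

lemma S_rec (m n : ℕ) :
    S m n - (if m + 2 ≤ n then S m (n - (m + 2)) else 0)
      = (if n = 0 then 1 else 0) - (if n = 1 then 1 else 0) := by
  have := congrArg (fun r : Polynomial ℤ => r.coeff n) (key m n)
  simp only [sub_mul, one_mul, mul_sub, mul_one, coeff_sub] at this
  have hX : ((X : Polynomial ℤ) ^ (m + 2) * F m n).coeff n
      = if m + 2 ≤ n then S m (n - (m + 2)) else 0 := by
    rw [mul_comm, coeff_mul_X_pow']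
    split_ifs with h
    · exact coeff_F m n (n - (m + 2)) (Nat.sub_le _ _)
    · rfl
  have hq1 : (q m ^ (n+1)).coeff n = 0 := coeff_q_pow_low m (n+1) n (Nat.lt_succ_self n)
  have hq2 : ((X : Polynomial ℤ) * q m ^ (n+1)).coeff n = 0 := by
    cases n with
    | zero => simp
    | succ k => rw [coeff_X_mul]; exact coeff_q_pow_low m (k+2) k (by omega)
  have hFn : (F m n).coeff n = S m n := rfl
  rw [hFn, hX, hq1, hq2, coeff_one, coeff_X, sub_zero, sub_zero] at this
  rw [this]
  split_ifs <;> omega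

lemma S_eq (m n : ℕ) :
    S m n = if n % (m + 2) = 0 then 1 else if n % (m + 2) = 1 then -1 else 0 := by
  induction n using Nat.strong_induction_on with
  | _ n ih =>
    have h := S_rec m n
    by_cases hn : m + 2 ≤ n
    · rw [if_pos hn, ih (n - (m + 2)) (by omega)] at h
      have hmod : (n - (m + 2)) % (m + 2) = n % (m + 2) := by
        conv_rhs => rw [← Nat.sub_add_cancel hn]
        rw [Nat.add_mod_right]
      rw [hmod, if_neg (by omega : n ≠ 0), if_neg (by omega : n ≠ 1)] at h
      split_ifs at h ⊢ <;> omega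
    · rw [if_neg hn] at h
      have hlt : n % (m + 2) = n := Nat.mod_eq_of_lt (by omega)
      rw [hlt]
      split_ifs at h ⊢ <;> omega

end PcAux

theorem pc_alternating_diagonal (m n : ℕ) (hm : 1 ≤ m) :
    ∑ k ∈ Finset.range (n + 1), (-1 : ℤ) ^ (n - k) * pc m (n - k) k =
      if n % (m + 2) = 0 then 1 else if n % (m + 2) = 1 then -1 else 0 := by
  have hstep : ∀ k ∈ Finset.range (n + 1),
      (-1 : ℤ) ^ (n - k) * pc m (n - k) k = (PcAux.q m ^ (n - k)).coeff n := by
    intro k hk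
    rw [Finset.mem_range] at hk
    have hk' : k ≤ n := by omega
    have h2 : (PcAux.q m ^ (n - k)).coeff (k + (n - k))
        = (-1 : ℤ) ^ (n - k) * (PcAux.p m ^ (n - k)).coeff k :=
      PcAux.coeff_q_pow m (n - k) k
    rw [Nat.add_sub_cancel' hk'] at h2
    rw [h2, pc, if_pos (Int.natCast_nonneg k), Int.toNat_natCast]
    rfl
  rw [Finset.sum_congr rfl hstep]
  have h3 : ∑ k ∈ Finset.range (n + 1), (PcAux.q m ^ (n - k)).coeff n
      = ∑ j ∈ Finset.range (n + 1), (PcAux.q m ^ j).coeff n := by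
    have := Finset.sum_range_reflect (fun j => (PcAux.q m ^ j).coeff n) (n + 1)
    simpa using this
  have h4 : ∑ j ∈ Finset.range (n + 1), (PcAux.q m ^ j).coeff n = PcAux.S m n := by
    rw [PcAux.S, PcAux.F, finset_sum_coeff]
  rw [h3, h4, PcAux.S_eq]
end

section
/- For integers r ≥ 0: sum over k from 0 to 6r of (-1)^k · C(2r, k; 3)^2 = (-1)^r · binomial(4r, r), where C(n,k;3) is the quadrinomial coefficient. -/
open Polynomial Finset

/-!
`P = (1 + t + t² + t³)^(2r)` is palindromic of degree `6r`, so the alternating sum of the squares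
of its coefficients is the coefficient of `t^(6r)` in `P(-t) P(t) = ((1 - t²) (1 + t²)²)^(2r)`,
that is, the coefficient of `y^(3r)` in `F_r = (1 - y)^(2r) (1 + y)^(4r)`. This central
coefficient is found by a Zeilberger-style recurrence: the differential equation
`(1 - y²) F_r' = (2r - 6r y) F_r` gives a three-term recurrence for the coefficients of `F_r`,
which together with the palindromy of `F_r` and `F_(r+1) = (1 - y)² (1 + y)⁴ F_r` makes the
central coefficient of `F_(r+1)` a rational multiple of that of `F_r`, with the same ratio as
for `(-1)^r C(4r, r)`.
-/

namespace Polynomial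

section Semiring

variable {R : Type*} [Semiring R]

lemma reflect_pow {p : R[X]} {N : ℕ} (hp : p.natDegree ≤ N) (n : ℕ) :
    reflect (n * N) (p ^ n) = reflect N p ^ n := by
  induction n with
  | zero => simp [reflect_one]
  | succ n ih =>
    rw [pow_succ, pow_succ, add_mul, one_mul,
      reflect_mul _ _ (natDegree_pow_le_of_le n hp) hp, ih]

lemma coeff_eq_coeff_of_reflect_eq {p : R[X]} {N i j : ℕ} (hp : reflect N p = p)
    (hij : i + j = N) : p.coeff i = p.coeff j :=
  calc p.coeff i = (reflect N p).coeff i := by rw [hp]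
    _ = p.coeff j := by rw [coeff_reflect, revAt_le (by omega), show N - i = j by omega]

lemma reflect_sum_range_X_pow (m : ℕ) :
    reflect m (∑ i ∈ range (m + 1), (X : R[X]) ^ i) = ∑ i ∈ range (m + 1), (X : R[X]) ^ i := by
  ext n
  rw [coeff_reflect]
  rcases le_or_gt n m with h | h
  · simp [revAt_le h, coeff_X_pow, h]
  · simp [revAt_eq_self_of_lt h, coeff_X_pow]

end Semiring

lemma coeff_comp_neg_X {R : Type*} [Ring R] (p : R[X]) (n : ℕ) :
    (p.comp (-X)).coeff n = p.coeff n * (-1) ^ n := by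
  rw [show (-X : R[X]) = C (-1) * X by simp, comp_C_mul_X_coeff]

lemma mul_derivative_pow {R : Type*} [CommSemiring R] (p : R[X]) (n : ℕ) :
    p * derivative (p ^ n) = C (n : R) * derivative p * p ^ n := by
  cases n with
  | zero => simp
  | succ n => rw [derivative_pow_succ, pow_succ]; push_cast; ring

section CommRing

variable {R : Type*} [CommRing R]

lemma sum_range_neg_one_pow_mul_coeff_sq {p : R[X]} {N : ℕ} (hp : reflect N p = p) :
    ∑ k ∈ range (N + 1), (-1) ^ k * p.coeff k ^ 2 = (p.comp (-X) * p).coeff N := by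
  rw [coeff_mul, Nat.sum_antidiagonal_eq_sum_range_succ_mk]
  refine sum_congr rfl fun k hk => ?_
  have hkN : k ≤ N := Nat.lt_succ_iff.mp (mem_range.mp hk)
  rw [coeff_comp_neg_X, ← coeff_eq_coeff_of_reflect_eq hp (Nat.add_sub_cancel' hkN)]
  ring

lemma one_sub_X_sq_mul_derivative (a b : ℕ) :
    (1 - X ^ 2) * derivative ((1 - X) ^ a * (1 + X) ^ b : R[X]) =
      (C (b - a : R) - C (a + b : R) * X) * ((1 - X) ^ a * (1 + X) ^ b) := by
  have ha := mul_derivative_pow (1 - X : R[X]) a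
  have hb := mul_derivative_pow (1 + X : R[X]) b
  simp only [derivative_sub, derivative_add, derivative_one, derivative_X] at ha hb
  rw [derivative_mul]
  simp only [map_sub, map_add]
  linear_combination (1 + X) * (1 + X) ^ b * ha + (1 - X) * (1 - X) ^ a * hb

lemma coeff_recurrence_of_ode {p : R[X]} {u v : R}
    (h : (1 - X ^ 2) * derivative p = (C u - C v * X) * p) (k : ℕ) :
    ((k : R) + 2) * p.coeff (k + 2) = u * p.coeff (k + 1) + (k - v) * p.coeff k := by
  have hk := congrArg (coeff · (k + 1)) h
  simp only [sub_mul, one_mul, coeff_sub, coeff_derivative, coeff_C_mul, mul_assoc,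
    coeff_X_mul] at hk
  have hX : (X ^ 2 * derivative p).coeff (k + 1) = k * p.coeff k := by
    cases k with
    | zero => simp [coeff_X_pow_mul']
    | succ k => rw [coeff_X_pow_mul, coeff_derivative]; push_cast; ring
  rw [hX] at hk
  push_cast at hk
  linear_combination hk

lemma one_sub_X_sq_mul_one_add_X_pow_four :
    ((1 - X) ^ 2 * (1 + X) ^ 4 : R[X]) =
      1 + C 2 * X - X ^ 2 - C 4 * X ^ 3 - X ^ 4 + C 2 * X ^ 5 + X ^ 6 := by
  simp only [show (C 2 : R[X]) = 2 from rfl, show (C 4 : R[X]) = 4 from rfl]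
  ring

lemma coeff_mul_one_sub_X_sq_mul_one_add_X_pow_four (p : R[X]) (n : ℕ) :
    (p * ((1 - X) ^ 2 * (1 + X) ^ 4)).coeff (n + 6) =
      p.coeff (n + 6) + 2 * p.coeff (n + 5) - p.coeff (n + 4) - 4 * p.coeff (n + 3) -
        p.coeff (n + 2) + 2 * p.coeff (n + 1) + p.coeff n := by
  rw [one_sub_X_sq_mul_one_add_X_pow_four]
  simp only [mul_add, mul_sub, mul_one, coeff_add, coeff_sub, ← mul_assoc, coeff_mul_C,
    coeff_mul_X_pow', coeff_mul_X, Nat.reduceSubDiff, Nat.le_add_left, if_true]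
  ring

end CommRing

end Polynomial

/-- The coefficient of `X ^ (3 * r)` is the terminating Kummer sum
`∑ j, (-1) ^ j * choose (2 * r) j * choose (4 * r) (3 * r - j)`. -/
noncomputable def kummerPoly (r : ℕ) : ℤ[X] := (1 - X) ^ (2 * r) * (1 + X) ^ (4 * r)

lemma kummerPoly_succ (r : ℕ) :
    kummerPoly (r + 1) = kummerPoly r * ((1 - X) ^ 2 * (1 + X) ^ 4) := by
  simp only [kummerPoly, mul_add, pow_add]
  ring

lemma reflect_kummerPoly (r : ℕ) : reflect (6 * r) (kummerPoly r) = kummerPoly r := by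
  have h1 : (1 - X : ℤ[X]).natDegree ≤ 1 := by compute_degree!
  have h2 : (1 + X : ℤ[X]).natDegree ≤ 1 := by compute_degree!
  rw [kummerPoly, show 6 * r = 2 * r * 1 + 4 * r * 1 by ring,
    reflect_mul _ _ (natDegree_pow_le_of_le _ h1) (natDegree_pow_le_of_le _ h2),
    reflect_pow h1, reflect_pow h2]
  simp only [reflect_sub, reflect_add, reflect_one, reflect_one_X, pow_one]
  rw [← neg_sub, Even.neg_pow (even_two_mul r), add_comm X 1]

lemma one_sub_X_sq_mul_derivative_kummerPoly (r : ℕ) :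
    (1 - X ^ 2) * derivative (kummerPoly r) =
      (C (2 * r : ℤ) - C (6 * r : ℤ) * X) * kummerPoly r := by
  rw [kummerPoly, one_sub_X_sq_mul_derivative]
  push_cast
  ring_nf

lemma kummerPoly_coeff_three_mul_succ (r : ℕ) :
    ((3 * r + 1) * (3 * r + 2) * (3 * r + 3) : ℤ) * (kummerPoly (r + 1)).coeff (3 * (r + 1)) =
      -8 * (4 * r + 1) * (2 * r + 1) * (4 * r + 3) * (kummerPoly r).coeff (3 * r) := by
  cases r with
  | zero => simp [kummerPoly, one_sub_X_sq_mul_one_add_X_pow_four, coeff_X, coeff_one]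
  | succ s =>
    -- The recurrence at `k = 3s+2, 3s+3, 3s+4` and palindromy about `3s+3` express every
    -- coefficient occurring in `hS` through the central one.
    have ode := coeff_recurrence_of_ode (one_sub_X_sq_mul_derivative_kummerPoly (s + 1))
    have hA := ode (3 * s + 2)
    have hB := ode (3 * s + 3)
    have hC := ode (3 * s + 4)
    have hS := coeff_mul_one_sub_X_sq_mul_one_add_X_pow_four (kummerPoly (s + 1)) (3 * s)
    rw [← kummerPoly_succ] at hS
    have hsym {i j : ℕ} (hij : i + j = 6 * (s + 1)) :
        (kummerPoly (s + 1)).coeff i = (kummerPoly (s + 1)).coeff j :=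
      coeff_eq_coeff_of_reflect_eq (reflect_kummerPoly (s + 1)) hij
    simp only [add_assoc, Nat.reduceAdd] at hA hB hC hS
    rw [hsym (i := 3 * s + 2) (j := 3 * s + 4) (by ring)] at hA hS
    rw [hsym (i := 3 * s + 1) (j := 3 * s + 5) (by ring),
      hsym (i := 3 * s) (j := 3 * s + 6) (by ring)] at hS
    rw [show 3 * (s + 1 + 1) = 3 * s + 6 by ring, show 3 * (s + 1) = 3 * s + 3 by ring]
    push_cast at hA hB hC ⊢
    linear_combination ((3 * s + 4) * (3 * s + 5) * (3 * s + 6) : ℤ) * hS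
      + (2 * (3 * s + 4) * (3 * s + 5) : ℤ) * hC + (4 * (3 * s + 4) * (4 * s + 7) : ℤ) * hB
      - (2 * (s + 2) * (s + 3) : ℤ) * hA

lemma choose_four_mul_add_four (r : ℕ) :
    (3 * r + 1) * (3 * r + 2) * (3 * r + 3) * (4 * r + 4).choose (r + 1) =
      8 * (4 * r + 1) * (2 * r + 1) * (4 * r + 3) * (4 * r).choose r := by
  have e1 : (4 * r + 4) * (4 * r + 3).choose r = (4 * r + 4).choose (r + 1) * (r + 1) :=
    Nat.add_one_mul_choose_eq (4 * r + 3) r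
  have e2 : (4 * r + 2).choose r * (4 * r + 3) = (4 * r + 3).choose r * (3 * r + 3) := by
    rw [Nat.choose_mul_succ_eq, show 4 * r + 2 + 1 - r = 3 * r + 3 by omega]
  have e3 : (4 * r + 1).choose r * (4 * r + 2) = (4 * r + 2).choose r * (3 * r + 2) := by
    rw [Nat.choose_mul_succ_eq, show 4 * r + 1 + 1 - r = 3 * r + 2 by omega]
  have e4 : (4 * r).choose r * (4 * r + 1) = (4 * r + 1).choose r * (3 * r + 1) := by
    rw [Nat.choose_mul_succ_eq, show 4 * r + 1 - r = 3 * r + 1 by omega]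
  apply Nat.eq_of_mul_eq_mul_left r.succ_pos
  zify at *
  linear_combination (-(3 * r + 1) * (3 * r + 2) * (3 * r + 3) : ℤ) * e1
    - ((3 * r + 1) * (3 * r + 2) * (4 * r + 4) : ℤ) * e2
    - ((3 * r + 1) * (4 * r + 4) * (4 * r + 3) : ℤ) * e3
    - ((4 * r + 4) * (4 * r + 3) * (4 * r + 2) : ℤ) * e4

lemma kummerPoly_coeff_three_mul (r : ℕ) :
    (kummerPoly r).coeff (3 * r) = (-1) ^ r * ((4 * r).choose r : ℤ) := by
  induction r with
  | zero => simp [kummerPoly]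
  | succ r ih =>
    have hc := congrArg (Nat.cast : ℕ → ℤ) (choose_four_mul_add_four r)
    push_cast at hc
    refine mul_left_cancel₀ (by positivity : ((3 * r + 1) * (3 * r + 2) * (3 * r + 3) : ℤ) ≠ 0) ?_
    rw [kummerPoly_coeff_three_mul_succ, ih, show 4 * (r + 1) = 4 * r + 4 by ring, pow_succ]
    linear_combination (-1) ^ r * hc

lemma sum_range_X_pow_comp_neg_X_mul :
    (∑ i ∈ range (3 + 1), (X : ℤ[X]) ^ i).comp (-X) * ∑ i ∈ range (3 + 1), (X : ℤ[X]) ^ i =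
      expand ℤ 2 ((1 - X) * (1 + X) ^ 2) := by
  simp only [sum_range_succ, sum_range_zero, zero_add, pow_zero, pow_one, add_comp, one_comp,
    X_comp, pow_comp, map_mul, map_sub, map_add, map_one, map_pow, expand_X]
  ring

theorem pc_quadrinomial_alt_squares (r : ℕ) :
    ∑ k ∈ Finset.range (6 * r + 1), (-1 : ℤ) ^ k * (pc 3 (2 * r) k) ^ 2 =
      (-1 : ℤ) ^ r * (Nat.choose (4 * r) r : ℤ) := by
  set q := ∑ i ∈ range (3 + 1), (X : ℤ[X]) ^ i
  have hpc (k : ℕ) : pc 3 (2 * r) k = (q ^ (2 * r)).coeff k := by simp [pc, q]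
  have hq : q.natDegree ≤ 3 := by
    simp only [q, sum_range_succ, sum_range_zero]
    compute_degree!
  have hsym : reflect (6 * r) (q ^ (2 * r)) = q ^ (2 * r) := by
    rw [show 6 * r = 2 * r * 3 by ring, reflect_pow hq, reflect_sum_range_X_pow]
  have hprod : (q ^ (2 * r)).comp (-X) * q ^ (2 * r) = expand ℤ 2 (kummerPoly r) := by
    rw [pow_comp, ← mul_pow, sum_range_X_pow_comp_neg_X_mul, ← map_pow, kummerPoly, mul_pow,
      ← pow_mul, show 2 * (2 * r) = 4 * r by ring]
  simp_rw [hpc]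
  rw [sum_range_neg_one_pow_mul_coeff_sq hsym, hprod, show 6 * r = 3 * r * 2 by ring,
    coeff_expand_mul two_pos, kummerPoly_coeff_three_mul]
end

section
/- For integers m ≥ 1, n ≥ 0, and k ≥ 0: sum over l from k to mn of C(n,l;m) · binomial(l,k) = sum over j from 0 to n of (-1)^(n-j) · binomial(n,j) · binomial((m+1)·j, k+n), identified as the coefficient of t^k in (p_m(1+t))^n. -/
open Polynomial Finset

/-!
Both sides are the coefficient of `t^k` in `p_m(1 + t)^n`. Expanding `(1 + t)^l` binomially
gives the left side. On the other hand `t · p_m(1 + t) = (1 + t)^(m+1) - 1`, so that coefficient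
is the coefficient of `t^(k+n)` in `((1 + t)^(m+1) - 1)^n`, and expanding this binomially gives
the right side.
-/

namespace Polynomial

theorem coeff_comp_X_add_one {R : Type*} [CommSemiring R] (p : R[X]) {d : ℕ}
    (hp : p.natDegree ≤ d) (k : ℕ) :
    (p.comp (X + 1)).coeff k = ∑ l ∈ Icc k d, p.coeff l * (l.choose k : R) := by
  have hsub : Icc k d ⊆ range (d + 1) := fun l hl => by
    simp only [mem_Icc, mem_range] at hl ⊢; omega
  conv_lhs => rw [p.as_sum_range_C_mul_X_pow' (Nat.lt_succ_of_le hp)]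
  simp only [sum_comp, C_mul_comp, X_pow_comp, finsetSum_coeff, coeff_C_mul,
    coeff_X_add_one_pow]
  refine (sum_subset hsub fun l _ hl => ?_).symm
  have hlk : l < k := by simp only [mem_Icc, mem_range] at *; omega
  rw [Nat.choose_eq_zero_of_lt hlk, Nat.cast_zero, mul_zero]

theorem geom_sum_X_comp_X_add_one_mul_X {R : Type*} [CommRing R] (m : ℕ) :
    (∑ i ∈ range m, (X : R[X]) ^ i).comp (X + 1) * X = (X + 1) ^ m - 1 := by
  have h := congrArg (fun q : R[X] => q.comp (X + 1)) (geom_sum_mul (X : R[X]) m)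
  simpa only [mul_comp, sub_comp, X_comp, X_pow_comp, one_comp, add_sub_cancel_right] using h

theorem coeff_X_add_one_pow_sub_one_pow {R : Type*} [CommRing R] (a n i : ℕ) :
    (((X + 1 : R[X]) ^ a - 1) ^ n).coeff i =
      ∑ j ∈ range (n + 1), (-1 : R) ^ (n - j) * (n.choose j : R) * ((a * j).choose i : R) := by
  rw [sub_eq_add_neg, add_pow, finsetSum_coeff]
  refine sum_congr rfl fun j _ => ?_
  have hC : (-1 : R[X]) ^ (n - j) * (n.choose j : R[X]) = C ((-1 : R) ^ (n - j) * n.choose j) := by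
    simp
  rw [← pow_mul, mul_assoc, hC, coeff_mul_C, coeff_X_add_one_pow]
  ring

end Polynomial

theorem pc_natCast_s16 (m n l : ℕ) :
    pc m n l = ((∑ i ∈ range (m + 1), (X : ℤ[X]) ^ i) ^ n).coeff l := by
  simp [pc]

theorem pc_binom_sum2_general (m n k : ℕ) :
    ∑ l ∈ Finset.Icc k (m * n), pc m n l * (Nat.choose l k : ℤ) =
      ∑ j ∈ Finset.range (n + 1),
        (-1 : ℤ) ^ (n - j) * (Nat.choose n j : ℤ) * (Nat.choose ((m + 1) * j) (k + n) : ℤ) := by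
  set P : ℤ[X] := ∑ i ∈ range (m + 1), X ^ i
  have hP : P.natDegree ≤ m := natDegree_sum_le_of_forall_le _ _ fun i hi => by
    simpa using Nat.lt_succ_iff.mp (mem_range.mp hi)
  have hdeg : (P ^ n).natDegree ≤ m * n := (natDegree_pow_le_of_le n hP).trans_eq (mul_comm _ _)
  simp only [pc_natCast_s16]
  rw [← coeff_comp_X_add_one _ hdeg, ← coeff_mul_X_pow _ n k, pow_comp, ← mul_pow,
    geom_sum_X_comp_X_add_one_mul_X, coeff_X_add_one_pow_sub_one_pow]

theorem pc_binom_sum2 (m n k : ℕ) (hm : 1 ≤ m) :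
    ∑ l ∈ Finset.Icc k (m * n), pc m n l * (Nat.choose l k : ℤ) =
      ∑ j ∈ Finset.range (n + 1),
        (-1 : ℤ) ^ (n - j) * (Nat.choose n j : ℤ) * (Nat.choose ((m + 1) * j) (k + n) : ℤ) :=
  pc_binom_sum2_general m n k
end

section
/- For integers m ≥ 1, n ≥ 0, and k ≥ 0, the upper summation formula holds: sum over l from 0 to n of C(l,k;m) = sum over i from 0 to k of χ_{m-1}(i) · C(n+1, k-i+1; m), where χ_{m-1}(i) = 1 if i ≡ 0 (mod m), -1 if i ≡ 1 (mod m), 0 otherwise (and χ_0(i) = [i=0] when m=1). -/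
open Polynomial Finset

namespace PcAux

open PowerSeries

noncomputable def Gp (m : ℕ) : PowerSeries ℤ := PowerSeries.mk (fun j => if m ∣ j then (1:ℤ) else 0)

def chi (m i : ℕ) : ℤ :=
  if m = 1 then (if i = 0 then 1 else 0)
  else if i % m = 0 then 1 else if i % m = 1 then -1 else 0

noncomputable def chiS (m : ℕ) : PowerSeries ℤ := PowerSeries.mk (chi m)

lemma gp_mul (m : ℕ) (hm : 1 ≤ m) : Gp m * (1 - PowerSeries.X ^ m) = 1 := by
  ext s
  rw [mul_sub, mul_one, map_sub, PowerSeries.coeff_mul_X_pow']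
  simp only [Gp, PowerSeries.coeff_mk, PowerSeries.coeff_one]
  rcases le_or_gt m s with h | h
  · rw [if_pos h]
    have h1 : m ∣ s ↔ m ∣ s - m := by
      constructor
      · intro hd; exact Nat.dvd_sub hd dvd_rfl
      · intro hd; have := Nat.dvd_add hd (dvd_refl m); rwa [Nat.sub_add_cancel h] at this
    have h2 : s ≠ 0 := by omega
    by_cases hd : m ∣ s
    · simp [hd, h1.mp hd, h2]
    · have hds : ¬ m ∣ s - m := fun hh => hd (h1.mpr hh)
      simp [hd, hds, h2]
  · rw [if_neg (show ¬ m ≤ s by omega), sub_zero]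
    rcases Nat.eq_zero_or_pos s with rfl | hs
    · simp
    · have hd : ¬ m ∣ s := fun hd => by have := Nat.le_of_dvd hs hd; omega
      have h2 : ¬ s = 0 := by omega
      simp [hd, h2]

lemma chiS_eq (m : ℕ) (hm : 1 ≤ m) : chiS m = Gp m * (1 - PowerSeries.X) := by
  ext s
  rw [mul_sub, mul_one, map_sub,
    show (PowerSeries.X : PowerSeries ℤ) = PowerSeries.X ^ 1 from (pow_one _).symm,
    PowerSeries.coeff_mul_X_pow']
  simp only [Gp, chiS, PowerSeries.coeff_mk]
  rcases Nat.eq_zero_or_pos s with rfl | hs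
  · rcases eq_or_ne m 1 with rfl | hm1
    · simp [chi]
    · simp [chi, hm1]
  · rw [if_pos (show 1 ≤ s by omega)]
    have e0 : m ∣ s ↔ s % m = 0 := Nat.dvd_iff_mod_eq_zero
    rcases eq_or_ne m 1 with rfl | h1
    · have h2 : ¬ s = 0 := by omega
      simp [chi, h2, Nat.one_dvd]
    · have hm2 : 2 ≤ m := by omega
      have e1 : m ∣ s - 1 ↔ s % m = 1 := by
        constructor
        · rintro ⟨c, hc⟩
          have hsc : s = m * c + 1 := by omega
          rw [hsc, Nat.mul_add_mod, Nat.mod_eq_of_lt hm2]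
        · intro hmod
          have hdm := Nat.div_add_mod s m
          exact ⟨s / m, by omega⟩
      simp only [chi, if_neg h1]
      by_cases h0 : s % m = 0
      · have hnd : ¬ m ∣ s - 1 := by rw [e1]; omega
        simp [e0.mpr h0, hnd, h0, (by omega : ¬ s % m = 1)]
      · have hnd : ¬ m ∣ s := fun h => h0 (e0.mp h)
        by_cases hone : s % m = 1
        · have hd1 : m ∣ s - 1 := e1.mpr hone
          simp [h0, hone, hd1, hnd]
        · have d1 : ¬ m ∣ s - 1 := fun h => hone (e1.mp h)
          simp [h0, hone, hnd, d1]

lemma chiS_inv (m : ℕ) (hm : 1 ≤ m) :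
    (∑ i ∈ Finset.range m, (PowerSeries.X : PowerSeries ℤ)^i) * chiS m = 1 := by
  rw [chiS_eq m hm]
  have h1 : (∑ i ∈ Finset.range m, (PowerSeries.X : PowerSeries ℤ)^i) * (1 - PowerSeries.X)
      = 1 - PowerSeries.X ^ m := by
    have := geom_sum_mul (PowerSeries.X : PowerSeries ℤ) m
    linear_combination -this
  calc (∑ i ∈ Finset.range m, (PowerSeries.X : PowerSeries ℤ)^i) * (Gp m * (1 - PowerSeries.X))
      = Gp m * ((∑ i ∈ Finset.range m, (PowerSeries.X : PowerSeries ℤ)^i) * (1 - PowerSeries.X)) := by ring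
    _ = Gp m * (1 - PowerSeries.X ^ m) := by rw [h1]
    _ = 1 := gp_mul m hm

noncomputable def Pp (m : ℕ) : PowerSeries ℤ := ∑ i ∈ Finset.range (m+1), (PowerSeries.X : PowerSeries ℤ) ^ i

lemma coe_P (m : ℕ) :
    (((∑ i ∈ Finset.range (m+1), (Polynomial.X : Polynomial ℤ) ^ i) : Polynomial ℤ) : PowerSeries ℤ)
      = Pp m := by
  ext t
  rw [Polynomial.coeff_coe]
  simp [Pp, Polynomial.finset_sum_coeff, Polynomial.coeff_X_pow, PowerSeries.coeff_X_pow]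

lemma pc_eq (m l j : ℕ) : pc m l (j : ℤ) = PowerSeries.coeff j (Pp m ^ l) := by
  rw [pc, if_pos (Int.natCast_nonneg j), Int.toNat_natCast, ← Polynomial.coeff_coe,
    Polynomial.coe_pow, coe_P]

lemma constCoeff_P (m : ℕ) : PowerSeries.constantCoeff (Pp m) = 1 := by
  simp [Pp, map_sum, Finset.sum_range_succ', pow_succ]

lemma p_sub_one (m : ℕ) (hm : 1 ≤ m) :
    Pp m - 1 = (∑ i ∈ Finset.range m, (PowerSeries.X : PowerSeries ℤ)^i) * PowerSeries.X := by
  rw [Pp, Finset.sum_range_succ', Finset.sum_mul]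
  simp [pow_succ]

end PcAux

open PcAux PowerSeries

theorem pc_upper_summation (m n k : ℕ) (hm : 1 ≤ m) :
    ∑ l ∈ Finset.range (n + 1), pc m l k =
      ∑ i ∈ Finset.range (k + 1),
        (if m = 1 then (if i = 0 then (1 : ℤ) else 0)
         else if i % m = 0 then 1 else if i % m = 1 then -1 else 0) *
          pc m (n + 1) ((k : ℤ) - i + 1) := by
  classical
  set S : PowerSeries ℤ := ∑ l ∈ Finset.range (n+1), Pp m ^ l with hS
  set Q : PowerSeries ℤ := ∑ i ∈ Finset.range m, (PowerSeries.X : PowerSeries ℤ)^i with hQ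
  have h1 : S * (Pp m - 1) = Pp m ^ (n+1) - 1 := geom_sum_mul (Pp m) (n+1)
  have h4 : S * PowerSeries.X = (Pp m ^ (n+1) - 1) * chiS m := by
    have hinv : Q * chiS m = 1 := chiS_inv m hm
    calc S * PowerSeries.X = S * PowerSeries.X * 1 := by ring
    _ = S * PowerSeries.X * (Q * chiS m) := by rw [hinv]
    _ = (S * (Q * PowerSeries.X)) * chiS m := by ring
    _ = (S * (Pp m - 1)) * chiS m := by rw [← p_sub_one m hm]
    _ = (Pp m ^ (n+1) - 1) * chiS m := by rw [h1]
  have h5 := congrArg (PowerSeries.coeff (k+1)) h4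
  rw [PowerSeries.coeff_succ_mul_X, mul_comm, PowerSeries.coeff_mul,
    Finset.Nat.sum_antidiagonal_eq_sum_range_succ_mk, Finset.sum_range_succ] at h5
  have hc0 : PowerSeries.coeff (k+1-(k+1)) (Pp m ^ (n+1) - 1) = 0 := by
    simp [PowerSeries.coeff_zero_eq_constantCoeff, map_sub, map_pow, constCoeff_P]
  rw [hc0, mul_zero, add_zero, hS, map_sum] at h5
  calc ∑ l ∈ Finset.range (n + 1), pc m l (k : ℤ)
      = ∑ l ∈ Finset.range (n+1), PowerSeries.coeff k (Pp m ^ l) := by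
        refine Finset.sum_congr rfl fun l _ => pc_eq m l k
    _ = ∑ i ∈ Finset.range (k+1),
          PowerSeries.coeff i (chiS m) * PowerSeries.coeff (k+1-i) (Pp m ^ (n+1) - 1) := h5
    _ = _ := by
        refine Finset.sum_congr rfl fun i hi => ?_
        have hik : i ≤ k := by simpa [Nat.lt_succ_iff] using hi
        have hcast : (k : ℤ) - i + 1 = ((k + 1 - i : ℕ) : ℤ) := by omega
        rw [hcast, pc_eq m (n+1) (k+1-i)]
        have hne : k + 1 - i ≠ 0 := by omega
        rw [map_sub, PowerSeries.coeff_one, if_neg hne, sub_zero]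
        congr 1
        simp [chiS, chi]
end
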